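/- arXiv:2202.00150 — 5 statements merged into one kernel-verified Lean document; each statement's English description precedes it below -/
import Mathlib

section
/- Let S be a finite set and let P and Q be row-stochastic S×S matrices (all entries nonnegative and every row sums to 1). Suppose ε ≥ 0 is such that Σ_{s'} |P(s,s') − Q(s,s')| ≤ ε for every s ∈ S, and let d : S → ℝ satisfy ‖d‖_∞ ≤ 1. Then for every natural number t, ‖(P^t − Q^t) d‖_∞ ≤ ε·t, where P^t denotes the t-th matrix power and (P^t − Q^t)d is the matrix-vector product. -/
private lemma stoch_pow {S : Type*} [Fintype S] [DecidableEq S] (Q : Matrix S S ℝ)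
    (hQ0 : ∀ s s', 0 ≤ Q s s') (hQ1 : ∀ s, ∑ s', Q s s' = 1) (t : ℕ) :
    (∀ s s', 0 ≤ (Q ^ t) s s') ∧ (∀ s, ∑ s', (Q ^ t) s s' = 1) := by
  induction t with
  | zero =>
    constructor
    · intro s s'
      simp [Matrix.one_apply]
      positivity
    · intro s
      simp [Matrix.one_apply]
  | succ n ih =>
    obtain ⟨ih0, ih1⟩ := ih
    constructor
    · intro s s'
      rw [pow_succ, Matrix.mul_apply]
      exact Finset.sum_nonneg fun j _ => mul_nonneg (ih0 _ _) (hQ0 _ _)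
    · intro s
      simp only [pow_succ, Matrix.mul_apply]
      rw [Finset.sum_comm]
      calc ∑ j, ∑ s', (Q ^ n) s j * Q j s' = ∑ j, (Q ^ n) s j * ∑ s', Q j s' := by
            simp [Finset.mul_sum]
        _ = 1 := by simp [hQ1, ih1]

private lemma stoch_mulVec {S : Type*} [Fintype S] (Q : Matrix S S ℝ)
    (hQ0 : ∀ s s', 0 ≤ Q s s') (hQ1 : ∀ s, ∑ s', Q s s' = 1)
    (v : S → ℝ) (c : ℝ) (hv : ∀ s, |v s| ≤ c) (s : S) :
    |(Q.mulVec v) s| ≤ c := by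
  calc |(Q.mulVec v) s| ≤ ∑ s', |Q s s' * v s'| := Finset.abs_sum_le_sum_abs _ _
    _ ≤ ∑ s', Q s s' * c := by
        apply Finset.sum_le_sum
        intro i _
        rw [abs_mul, abs_of_nonneg (hQ0 s i)]
        exact mul_le_mul_of_nonneg_left (hv i) (hQ0 s i)
    _ = c := by rw [← Finset.sum_mul, hQ1, one_mul]

/-- Perturbation bound for powers of row-stochastic matrices:
if the rows of `P` and `Q` differ by at most `ε` in `ℓ₁` norm and `‖d‖_∞ ≤ 1`,
then `‖(P^t - Q^t) d‖_∞ ≤ ε t`. -/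
theorem stmt_2 {S : Type*} [Fintype S] [DecidableEq S]
    (P Q : Matrix S S ℝ)
    (hP0 : ∀ s s', 0 ≤ P s s') (hP1 : ∀ s, ∑ s', P s s' = 1)
    (hQ0 : ∀ s s', 0 ≤ Q s s') (hQ1 : ∀ s, ∑ s', Q s s' = 1)
    (ε : ℝ) (hε : 0 ≤ ε)
    (hPQ : ∀ s, ∑ s', |P s s' - Q s s'| ≤ ε)
    (d : S → ℝ) (hd : ∀ s, |d s| ≤ 1) :
    ∀ t : ℕ, ∀ s, |((P ^ t - Q ^ t).mulVec d) s| ≤ ε * t := by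
  intro t
  induction t with
  | zero => intro s; simp
  | succ n ih =>
    intro s
    have key : P ^ (n + 1) - Q ^ (n + 1) = P * (P ^ n - Q ^ n) + (P - Q) * Q ^ n := by
      rw [pow_succ', pow_succ', mul_sub, sub_mul]; abel
    rw [key, Matrix.add_mulVec]
    have h1 : ∀ s, |((P * (P ^ n - Q ^ n)).mulVec d) s| ≤ ε * n := by
      intro s
      rw [← Matrix.mulVec_mulVec]
      exact stoch_mulVec P hP0 hP1 _ _ ih s
    have h2 : ∀ s, |(((P - Q) * Q ^ n).mulVec d) s| ≤ ε := by
      intro s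
      rw [← Matrix.mulVec_mulVec]
      obtain ⟨hq0, hq1⟩ := stoch_pow Q hQ0 hQ1 n
      have hv : ∀ s, |((Q ^ n).mulVec d) s| ≤ 1 :=
        fun s => stoch_mulVec (Q ^ n) hq0 hq1 d 1 hd s
      calc |((P - Q).mulVec ((Q ^ n).mulVec d)) s|
          ≤ ∑ s', |(P s s' - Q s s') * ((Q ^ n).mulVec d) s'| := by
            simpa [Matrix.mulVec, dotProduct, Matrix.sub_apply] using
              Finset.abs_sum_le_sum_abs
                (fun s' => (P s s' - Q s s') * ((Q ^ n).mulVec d) s') Finset.univ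
        _ ≤ ∑ s', |P s s' - Q s s'| := by
            apply Finset.sum_le_sum
            intro i _
            rw [abs_mul]
            calc |P s i - Q s i| * |((Q ^ n).mulVec d) i|
                ≤ |P s i - Q s i| * 1 :=
                  mul_le_mul_of_nonneg_left (hv i) (abs_nonneg _)
              _ = _ := mul_one _
        _ ≤ ε := hPQ s
    calc |((P * (P ^ n - Q ^ n)).mulVec d) s + (((P - Q) * Q ^ n).mulVec d) s|
        ≤ |((P * (P ^ n - Q ^ n)).mulVec d) s| + |(((P - Q) * Q ^ n).mulVec d) s| :=
          abs_add_le _ _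
      _ ≤ ε * n + ε := add_le_add (h1 s) (h2 s)
      _ = ε * (n + 1) := by ring
    simp [Pi.add_apply]
end

section
/- Let p, p̂, q, α be nonnegative real numbers such that |p̂ − p| ≤ 4·√(p̂·α) + 28·α and |q − p̂| ≤ 4·√(p̂·α) + 28·α. Then √p̂ ≤ √p + 10·√α, and consequently |q − p| ≤ 8·√(p·α) + 136·α. -/
/-- Converting a Bernstein-type confidence radius in terms of the empirical
probability into one in terms of the true probability. -/
theorem stmt_7 (p phat q α : ℝ)
    (hp : 0 ≤ p) (hphat : 0 ≤ phat) (hq : 0 ≤ q) (hα : 0 ≤ α)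
    (h1 : |phat - p| ≤ 4 * Real.sqrt (phat * α) + 28 * α)
    (h2 : |q - phat| ≤ 4 * Real.sqrt (phat * α) + 28 * α) :
    Real.sqrt phat ≤ Real.sqrt p + 10 * Real.sqrt α ∧
    |q - p| ≤ 8 * Real.sqrt (p * α) + 136 * α := by
  set s := Real.sqrt p with hs
  set x := Real.sqrt phat with hx
  set a := Real.sqrt α with ha
  have hs0 : 0 ≤ s := Real.sqrt_nonneg _
  have hx0 : 0 ≤ x := Real.sqrt_nonneg _
  have ha0 : 0 ≤ a := Real.sqrt_nonneg _
  have hs2 : s ^ 2 = p := Real.sq_sqrt hp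
  have hx2 : x ^ 2 = phat := Real.sq_sqrt hphat
  have ha2 : a ^ 2 = α := Real.sq_sqrt hα
  have hmul : Real.sqrt (phat * α) = x * a := Real.sqrt_mul hphat α
  have hmul' : Real.sqrt (p * α) = s * a := Real.sqrt_mul hp α
  rw [hmul] at h1 h2
  rw [hmul']
  have h1' := abs_le.mp h1
  have h2' := abs_le.mp h2
  have key : x ≤ s + 10 * a := by nlinarith [sq_nonneg (x - 2 * a), sq_nonneg (x - s - 10 * a), sq_nonneg (s + 6 * a), sq_nonneg a]
  refine ⟨key, ?_⟩
  have : |q - p| ≤ |q - phat| + |phat - p| := abs_sub_le q phat p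
  rw [abs_le]
  constructor <;> nlinarith [abs_le.mp h1, abs_le.mp h2, mul_nonneg hs0 ha0, mul_nonneg (mul_nonneg hs0 ha0) ha0, sq_nonneg a, mul_nonneg ha0 ha0]
end

section
/- Let S and A be finite sets, P : S × A → Δ(S) a transition function, π : S → Δ(A) a policy, and d : S × A → [0,1] a utility function. Suppose v : S → ℝ and J ∈ ℝ satisfy the average-reward Bellman equation: for every s ∈ S, v(s) = Σ_{a} π(a|s)·( d(s,a) − J + Σ_{s'} P(s,a)(s')·v(s') ). For a horizon H ≥ 1, define the finite-horizon value functions by V_{H+1}(s) = 0 and, for h = H, H−1, …, 1, V_h(s) = Σ_{a} π(a|s)·( d(s,a) + Σ_{s'} P(s,a)(s')·V_{h+1}(s') ). Then for every h ∈ {1, …, H} and every s ∈ S, |V_h(s) − (H − h + 1)·J| ≤ sp(v), where sp(v) = max_s v(s) − min_s v(s). -/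
open Finset

lemma conv_lb {I : Type*} [Fintype I] (w f : I → ℝ) (hw : ∀ i, 0 ≤ w i)
    (hs : ∑ i, w i = 1) (lo : ℝ) (hf : ∀ i, lo ≤ f i) :
    lo ≤ ∑ i, w i * f i := by
  calc lo = ∑ i, w i * lo := by rw [← Finset.sum_mul, hs, one_mul]
  _ ≤ ∑ i, w i * f i :=
    Finset.sum_le_sum fun i _ => mul_le_mul_of_nonneg_left (hf i) (hw i)

lemma conv_ub {I : Type*} [Fintype I] (w f : I → ℝ) (hw : ∀ i, 0 ≤ w i)
    (hs : ∑ i, w i = 1) (hi : ℝ) (hf : ∀ i, f i ≤ hi) :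
    ∑ i, w i * f i ≤ hi := by
  calc ∑ i, w i * f i ≤ ∑ i, w i * hi :=
    Finset.sum_le_sum fun i _ => mul_le_mul_of_nonneg_left (hf i) (hw i)
  _ = hi := by rw [← Finset.sum_mul, hs, one_mul]

open Finset in
/-- The `H`-step value of a stationary policy deviates from `H` times its average
reward `J` by at most the span of its bias function `v`. -/
theorem stmt_8 {S A : Type*} [Fintype S] [Fintype A] [Nonempty S]
    (P : S → A → S → ℝ)
    (hP : ∀ s a, (∀ s', 0 ≤ P s a s') ∧ ∑ s', P s a s' = 1)
    (π : S → A → ℝ)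
    (hπ : ∀ s, (∀ a, 0 ≤ π s a) ∧ ∑ a, π s a = 1)
    (d : S → A → ℝ) (hd : ∀ s a, 0 ≤ d s a ∧ d s a ≤ 1)
    (v : S → ℝ) (J : ℝ)
    (hBellman : ∀ s, v s = ∑ a, π s a * (d s a - J + ∑ s', P s a s' * v s'))
    (H : ℕ) (hH : 1 ≤ H)
    (V : ℕ → S → ℝ)
    (hVend : ∀ s, V (H + 1) s = 0)
    (hV : ∀ h, 1 ≤ h → h ≤ H → ∀ s,
      V h s = ∑ a, π s a * (d s a + ∑ s', P s a s' * V (h + 1) s')) :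
    ∀ h, 1 ≤ h → h ≤ H → ∀ s,
      |V h s - ((H : ℝ) - (h : ℝ) + 1) * J|
        ≤ univ.sup' univ_nonempty v - univ.inf' univ_nonempty v := by
  set M := univ.sup' univ_nonempty v with hMdef
  set m := univ.inf' univ_nonempty v with hmdef
  have hm : ∀ s, m ≤ v s := fun s => inf'_le _ (mem_univ s)
  have hM : ∀ s, v s ≤ M := fun s => le_sup' _ (mem_univ s)
  have claim : ∀ n, n ≤ H → ∀ s,
      -M ≤ V (H + 1 - n) s - (n : ℝ) * J - v s ∧
      V (H + 1 - n) s - (n : ℝ) * J - v s ≤ -m := by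
    intro n
    induction n with
    | zero =>
      intro _ s
      simp only [Nat.sub_zero, hVend, Nat.cast_zero, zero_mul]
      constructor
      · linarith [hM s]
      · linarith [hm s]
    | succ n ih =>
      intro hn s
      have hn' : n ≤ H := Nat.le_of_succ_le hn
      have h1 : 1 ≤ H - n := by omega
      have h2 : H - n ≤ H := Nat.sub_le _ _
      have hEq : H + 1 - (n + 1) = H - n := by omega
      have hEq2 : H - n + 1 = H + 1 - n := by omega
      have key : V (H + 1 - (n + 1)) s - ((n : ℝ) + 1) * J - v s =
          ∑ a, π s a * (∑ s', P s a s' * (V (H + 1 - n) s' - (n : ℝ) * J - v s')) := by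
        rw [hEq, hV _ h1 h2 s, hEq2]
        have inner : ∀ a, ∑ s', P s a s' * (V (H + 1 - n) s' - (n : ℝ) * J - v s') =
            (∑ s', P s a s' * V (H + 1 - n) s') - (n : ℝ) * J
              - ∑ s', P s a s' * v s' := by
          intro a
          simp only [mul_sub, Finset.sum_sub_distrib, ← Finset.sum_mul, (hP s a).2, one_mul]
        have hPs : ∀ a, ∑ s', P s a s' = 1 := fun a => (hP s a).2
        conv_lhs => rw [hBellman s]
        simp only [inner, mul_sub, mul_add, Finset.sum_sub_distrib, Finset.sum_add_distrib,
          ← Finset.sum_mul, (hπ s).2, one_mul, hPs, mul_one]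
        ring
      rw [hEq] at key
      push_cast
      rw [key]
      constructor
      · exact conv_lb _ _ (hπ s).1 (hπ s).2 _ fun a =>
          conv_lb _ _ (hP s a).1 (hP s a).2 _ fun s' => (ih hn' s').1
      · exact conv_ub _ _ (hπ s).1 (hπ s).2 _ fun a =>
          conv_ub _ _ (hP s a).1 (hP s a).2 _ fun s' => (ih hn' s').2
  intro h h1 h2 s
  have hn : H + 1 - h ≤ H := by omega
  have hh : H + 1 - (H + 1 - h) = h := by omega
  obtain ⟨lb, ub⟩ := claim (H + 1 - h) hn s
  rw [hh] at lb ub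
  have hcast : ((H + 1 - h : ℕ) : ℝ) = (H : ℝ) - (h : ℝ) + 1 := by
    have : h ≤ H + 1 := by omega
    push_cast [Nat.cast_sub this]
    ring
  rw [hcast] at lb ub
  rw [abs_le]
  constructor
  · linarith [hm s]
  · linarith [hM s]
end

section
/- Let (X_i)_{i≥1} be a martingale difference sequence with respect to a filtration (F_i)_{i≥0} (i.e., X_i is F_i-measurable and E[X_i | F_{i−1}] = 0), with |X_i| ≤ B almost surely for all i, and let δ ∈ (0,1). Then with probability at least 1 − δ, simultaneously for all integers l ≥ 1 and n ≥ 1, |Σ_{i=l}^{l+n−1} X_i| ≤ B·√( 2·n·ln( 4·(l+n−1)³ / δ ) ). -/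
/-!
By convexity of `exp`, `exp (t x) ≤ cosh (t B) + x sinh (t B) / B` on `[-B, B]`, so a bounded
martingale difference has conditional moment generating function at most
`cosh (t B) ≤ exp (t² B² / 2)`. Peeling off the last term with the tower property shows that a
block of `n` consecutive differences is sub-Gaussian with variance proxy `n B²`, hence
`|∑_{i=l}^{l+n-1} X_i|` exceeds `B √(2 n L)` with probability at most `2 e^{-L}`. Taking
`L = log (4 M³ / δ)` with `M = l + n - 1`, the union bound over all intervals costs
`∑_M M · δ / (2 M³) = δ ζ(2) / 2 ≤ δ`.
-/

open MeasureTheory ProbabilityTheory Real Finset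

lemma Real.exp_mul_le_cosh_add_sinh_div_mul {B x : ℝ} (hx : |x| ≤ B) (t : ℝ) :
    exp (t * x) ≤ cosh (t * B) + sinh (t * B) / B * x := by
  obtain ⟨hBx, hxB⟩ := abs_le.mp hx
  rcases (neg_le_self_iff.mp (hBx.trans hxB)).eq_or_lt with rfl | hB
  · simp [le_antisymm hxB (by linarith)]
  -- `t * x` is the convex combination of `± t * B` with weights `(B ∓ x) / 2B`.
  have hconv := convexOn_exp.2 (Set.mem_univ (t * -B)) (Set.mem_univ (t * B))
    (div_nonneg (by linarith : 0 ≤ B - x) (by linarith : 0 ≤ 2 * B))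
    (div_nonneg (by linarith : 0 ≤ B + x) (by linarith : 0 ≤ 2 * B)) (by field_simp; ring)
  have hcomb : (B - x) / (2 * B) * (t * -B) + (B + x) / (2 * B) * (t * B) = t * x := by
    field_simp; ring
  simp only [smul_eq_mul, hcomb] at hconv
  refine hconv.trans_eq ?_
  rw [cosh_eq, sinh_eq, mul_neg]
  field_simp
  ring

namespace MeasureTheory

variable {Ω : Type*} {m m0 : MeasurableSpace Ω} {μ : Measure Ω}

lemma condExp_exp_mul_le_of_abs_le [IsFiniteMeasure μ] (hm : m ≤ m0) {X : Ω → ℝ}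
    (hX : Integrable X μ) (hX0 : μ[X|m] =ᵐ[μ] 0) {B : ℝ} (hXB : ∀ᵐ ω ∂μ, |X ω| ≤ B) (t : ℝ) :
    μ[fun ω => exp (t * X ω)|m] ≤ᵐ[μ] fun _ => exp (t ^ 2 * B ^ 2 / 2) := by
  set c := sinh (t * B) / B
  have hline : μ[fun ω => exp (t * X ω)|m] ≤ᵐ[μ] μ[(fun _ => cosh (t * B)) + c • X|m] := by
    refine condExp_mono (integrable_exp_mul_of_mem_Icc hX.aemeasurable
      (hXB.mono fun ω h => abs_le.mp h)) ((integrable_const _).add (hX.smul c)) ?_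
    filter_upwards [hXB] with ω h
    exact (exp_mul_le_cosh_add_sinh_div_mul h t).trans_eq (by simp [c, mul_comm])
  have hmean : μ[(fun _ => cosh (t * B)) + c • X|m] =ᵐ[μ] fun _ => cosh (t * B) := by
    filter_upwards [condExp_add (integrable_const _) (hX.smul c) m, condExp_smul c X m, hX0]
      with ω hadd hsmul h0
    rw [hadd, Pi.add_apply, condExp_const hm, hsmul, Pi.smul_apply, h0]
    simp
  filter_upwards [hline, hmean] with ω h1 h2
  calc _ ≤ cosh (t * B) := h1.trans_eq h2
    _ ≤ exp (t ^ 2 * B ^ 2 / 2) := by simpa [mul_pow] using cosh_le_exp_half_sq (t * B)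

lemma integral_mul_le_of_condExp_le [IsFiniteMeasure μ] (hm : m ≤ m0) {f g : Ω → ℝ}
    (hf : StronglyMeasurable[m] f) (hf0 : ∀ ω, 0 ≤ f ω) {C : ℝ} (hfC : ∀ᵐ ω ∂μ, f ω ≤ C)
    (hg : Integrable g μ) {c : ℝ} (hgc : μ[g|m] ≤ᵐ[μ] fun _ => c) :
    ∫ ω, f ω * g ω ∂μ ≤ (∫ ω, f ω ∂μ) * c := by
  have hfC' : ∀ᵐ ω ∂μ, ‖f ω‖ ≤ C := hfC.mono fun ω h => by rwa [norm_of_nonneg (hf0 ω)]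
  have hfm : AEStronglyMeasurable f μ := (hf.mono hm).aestronglyMeasurable
  calc ∫ ω, f ω * g ω ∂μ = ∫ ω, (μ[f * g|m]) ω ∂μ := (integral_condExp hm).symm
    _ = ∫ ω, f ω * (μ[g|m]) ω ∂μ :=
      integral_congr_ae (condExp_stronglyMeasurable_mul_of_bound hm hf hg C hfC')
    _ ≤ ∫ ω, f ω * c ∂μ := by
      refine integral_mono_ae (integrable_condExp.bdd_mul hfm hfC')
        ((Integrable.of_bound hfm C hfC').mul_const c) ?_
      filter_upwards [hgc] with ω h using mul_le_mul_of_nonneg_left h (hf0 ω)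
    _ = (∫ ω, f ω ∂μ) * c := integral_mul_const c f

lemma ae_abs_sum_le_card_mul {ι : Type*} [Countable ι] {X : ι → Ω → ℝ} {B : ℝ}
    (hbdd : ∀ i, ∀ᵐ ω ∂μ, |X i ω| ≤ B) (s : Finset ι) :
    ∀ᵐ ω ∂μ, |∑ i ∈ s, X i ω| ≤ #s * B := by
  filter_upwards [ae_all_iff.2 hbdd] with ω h
  calc |∑ i ∈ s, X i ω| ≤ ∑ i ∈ s, |X i ω| := abs_sum_le_sum_abs _ _
    _ ≤ #s * B := by simpa using sum_le_sum fun i _ => h i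

variable [IsProbabilityMeasure μ] {ℱ : Filtration ℕ m0} {X : ℕ → Ω → ℝ} {B : ℝ}

lemma integral_exp_mul_sum_Ico_le (hadapted : ∀ i, StronglyMeasurable[ℱ i] (X i))
    (hint : ∀ i, Integrable (X i) μ) (hmds : ∀ i, 1 ≤ i → μ[X i | ℱ (i - 1)] =ᵐ[μ] 0)
    (hbdd : ∀ i, ∀ᵐ ω ∂μ, |X i ω| ≤ B) (t : ℝ) {l : ℕ} (hl : 1 ≤ l) (n : ℕ) :
    ∫ ω, exp (t * ∑ i ∈ Ico l (l + n), X i ω) ∂μ ≤ exp (n * (t ^ 2 * B ^ 2 / 2)) := by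
  induction n with
  | zero => simp
  | succ k ih =>
    have hS : StronglyMeasurable[ℱ (l + k - 1)]
        fun ω => exp (t * ∑ i ∈ Ico l (l + k), X i ω) :=
      continuous_exp.comp_stronglyMeasurable <| (Finset.stronglyMeasurable_fun_sum _
        fun i hi => (hadapted i).mono (ℱ.mono (by grind))).const_mul t
    have hSC : ∀ᵐ ω ∂μ, exp (t * ∑ i ∈ Ico l (l + k), X i ω) ≤ exp (|t| * (k * B)) := by
      filter_upwards [ae_abs_sum_le_card_mul hbdd (Ico l (l + k))] with ω h
      rw [Nat.card_Ico, Nat.add_sub_cancel_left] at h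
      exact exp_le_exp.2 <| (le_abs_self _).trans <| (abs_mul t _).trans_le <|
        mul_le_mul_of_nonneg_left h (abs_nonneg t)
    calc ∫ ω, exp (t * ∑ i ∈ Ico l (l + (k + 1)), X i ω) ∂μ
        = ∫ ω, exp (t * ∑ i ∈ Ico l (l + k), X i ω) * exp (t * X (l + k) ω) ∂μ := by
          simp_rw [← add_assoc, sum_Ico_succ_top (le_add_right le_rfl), mul_add, exp_add]
      _ ≤ (∫ ω, exp (t * ∑ i ∈ Ico l (l + k), X i ω) ∂μ) * exp (t ^ 2 * B ^ 2 / 2) :=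
          integral_mul_le_of_condExp_le (ℱ.le _) hS (fun _ => (exp_pos _).le) hSC
            (integrable_exp_mul_of_mem_Icc (hint _).aemeasurable
              ((hbdd _).mono fun ω h => abs_le.mp h))
            (condExp_exp_mul_le_of_abs_le (ℱ.le _) (hint _) (hmds _ (by omega)) (hbdd _) t)
      _ ≤ exp (k * (t ^ 2 * B ^ 2 / 2)) * exp (t ^ 2 * B ^ 2 / 2) := by gcongr
      _ = exp ((k + 1 : ℕ) * (t ^ 2 * B ^ 2 / 2)) := by rw [← exp_add]; push_cast; ring_nf

lemma hasSubgaussianMGF_sum_Ico (hadapted : ∀ i, StronglyMeasurable[ℱ i] (X i))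
    (hint : ∀ i, Integrable (X i) μ) (hmds : ∀ i, 1 ≤ i → μ[X i | ℱ (i - 1)] =ᵐ[μ] 0)
    (hbdd : ∀ i, ∀ᵐ ω ∂μ, |X i ω| ≤ B) {l : ℕ} (hl : 1 ≤ l) (n : ℕ) :
    HasSubgaussianMGF (fun ω => ∑ i ∈ Ico l (l + n), X i ω) (n * B ^ 2).toNNReal μ where
  integrable_exp_mul _ := integrable_exp_mul_of_mem_Icc
    (Finset.aemeasurable_fun_sum _ fun i _ => (hint i).aemeasurable)
    ((ae_abs_sum_le_card_mul hbdd _).mono fun _ h => abs_le.mp h)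
  mgf_le t := (integral_exp_mul_sum_Ico_le hadapted hint hmds hbdd t hl n).trans_eq
    (by rw [Real.coe_toNNReal _ (by positivity)]; ring_nf)

lemma measure_lt_abs_sum_Ico_le (hadapted : ∀ i, StronglyMeasurable[ℱ i] (X i))
    (hint : ∀ i, Integrable (X i) μ) (hmds : ∀ i, 1 ≤ i → μ[X i | ℱ (i - 1)] =ᵐ[μ] 0)
    (hB : 0 ≤ B) (hbdd : ∀ i, ∀ᵐ ω ∂μ, |X i ω| ≤ B) {l : ℕ} (hl : 1 ≤ l) (n : ℕ) (L : ℝ) :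
    μ {ω | B * √(2 * n * L) < |∑ i ∈ Ico l (l + n), X i ω|} ≤ ENNReal.ofReal (2 * exp (-L)) := by
  rcases lt_or_ge L 0 with hL | hL
  · refine prob_le_one.trans (ENNReal.one_le_ofReal.2 ?_)
    linarith [one_le_exp (neg_nonneg.2 hL.le)]
  set ε := B * √(2 * n * L)
  have hε : 0 ≤ ε := by positivity
  rcases (mul_nonneg n.cast_nonneg hB).eq_or_lt with hnB | hnB
  · refine (measure_mono_null (fun ω hω => ?_)
      (ae_iff.1 (ae_abs_sum_le_card_mul hbdd (Ico l (l + n))))).trans_le bot_le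
    simp only [Set.mem_ofPred_eq, Nat.card_Ico, Nat.add_sub_cancel_left, ← hnB, not_le] at hω ⊢
    exact hε.trans_lt hω
  have hsubG := hasSubgaussianMGF_sum_Ico hadapted hint hmds hbdd hl n
  have hexponent : -ε ^ 2 / (2 * ((n * B ^ 2).toNNReal : ℝ)) = -L := by
    have : (n : ℝ) ≠ 0 ∧ B ≠ 0 := by constructor <;> rintro h <;> simp [h] at hnB
    rw [Real.coe_toNNReal _ (by positivity), mul_pow, sq_sqrt (by positivity)]
    field_simp [this.1, this.2]
  have htail : ∀ {Y : Ω → ℝ}, HasSubgaussianMGF Y (n * B ^ 2).toNNReal μ →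
      μ {ω | ε ≤ Y ω} ≤ ENNReal.ofReal (exp (-L)) := fun hY => by
    rw [ENNReal.le_ofReal_iff_toReal_le (measure_ne_top _ _) (exp_pos _).le, ← measureReal_def,
      ← hexponent]
    exact hY.measure_ge_le hε
  calc μ {ω | ε < |∑ i ∈ Ico l (l + n), X i ω|}
      ≤ μ ({ω | ε ≤ ∑ i ∈ Ico l (l + n), X i ω} ∪ {ω | ε ≤ -∑ i ∈ Ico l (l + n), X i ω}) :=
        measure_mono fun ω (hω : ε < _) => by
          rcases lt_abs.1 hω with h | h
          exacts [.inl h.le, .inr h.le]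
    _ ≤ ENNReal.ofReal (exp (-L)) + ENNReal.ofReal (exp (-L)) :=
        (measure_union_le _ _).trans (add_le_add (htail hsubG) (htail hsubG.neg))
    _ = ENNReal.ofReal (2 * exp (-L)) := by
        rw [← ENNReal.ofReal_add (exp_pos _).le (exp_pos _).le, two_mul]

end MeasureTheory

lemma ENNReal.tsum_prod_nat_add (f : ℕ → ENNReal) :
    ∑' p : ℕ × ℕ, f (p.1 + p.2) = ∑' n, (n + 1) * f n := by
  rw [← HasAntidiagonal.sigmaAntidiagonalEquivProd.tsum_eq, ENNReal.tsum_sigma']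
  refine tsum_congr fun n => ?_
  rw [tsum_fintype]
  calc _ = ∑ _ : antidiagonal n, f n :=
        Finset.sum_congr rfl fun b _ => congrArg f (mem_antidiagonal.1 b.2)
    _ = (n + 1) * f n := by simp

lemma tsum_ofReal_div_two_mul_cube_le {δ : ℝ} (hδ : 0 ≤ δ) :
    ∑' p : ℕ × ℕ, ENNReal.ofReal (δ / (2 * ((p.1 + p.2 + 1 : ℕ) : ℝ) ^ 3))
      ≤ ENNReal.ofReal δ := by
  have hzeta :
      HasSum (fun n : ℕ => δ / 2 * (1 / ((n + 1 : ℕ) : ℝ) ^ 2)) (δ / 2 * (π ^ 2 / 6)) := by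
    simpa using ((hasSum_nat_add_iff' 1).2 hasSum_zeta_two).mul_left (δ / 2)
  calc ∑' p : ℕ × ℕ, ENNReal.ofReal (δ / (2 * ((p.1 + p.2 + 1 : ℕ) : ℝ) ^ 3))
      = ∑' n : ℕ, (n + 1) * ENNReal.ofReal (δ / (2 * ((n + 1 : ℕ) : ℝ) ^ 3)) :=
        ENNReal.tsum_prod_nat_add fun n => ENNReal.ofReal (δ / (2 * ((n + 1 : ℕ) : ℝ) ^ 3))
    _ = ∑' n : ℕ, ENNReal.ofReal (δ / 2 * (1 / ((n + 1 : ℕ) : ℝ) ^ 2)) :=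
      tsum_congr fun n => by
        rw [← Nat.cast_add_one, ← ENNReal.ofReal_natCast, ← ENNReal.ofReal_mul (by positivity)]
        congr 1
        field_simp
    _ = ENNReal.ofReal (δ / 2 * (π ^ 2 / 6)) := by
        rw [← ENNReal.ofReal_tsum_of_nonneg (fun n => by positivity) hzeta.summable, hzeta.tsum_eq]
    _ ≤ ENNReal.ofReal δ := by
        have : π ^ 2 ≤ 12 := by nlinarith [pi_lt_d2, pi_pos]
        exact ENNReal.ofReal_le_ofReal (by nlinarith)

theorem stmt_12_general {Ω : Type*} {m : MeasurableSpace Ω} (μ : Measure Ω)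
    [IsProbabilityMeasure μ] (ℱ : Filtration ℕ m)
    (X : ℕ → Ω → ℝ) (B : ℝ) (hB : 0 ≤ B)
    (hadapted : ∀ i, StronglyMeasurable[ℱ i] (X i))
    (hint : ∀ i, Integrable (X i) μ)
    (hmds : ∀ i, 1 ≤ i → μ[X i | ℱ (i - 1)] =ᵐ[μ] 0)
    (hbdd : ∀ i, ∀ᵐ ω ∂μ, |X i ω| ≤ B)
    (δ : ℝ) (hδ0 : 0 < δ) :
    1 - ENNReal.ofReal δ ≤
      μ {ω | ∀ l, 1 ≤ l → ∀ n, 1 ≤ n →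
        |∑ i ∈ Finset.Icc l (l + n - 1), X i ω|
          ≤ B * Real.sqrt (2 * n * Real.log (4 * ((l + n - 1) : ℕ) ^ 3 / δ))} := by
  set G := {ω | ∀ l, 1 ≤ l → ∀ n, 1 ≤ n →
        |∑ i ∈ Finset.Icc l (l + n - 1), X i ω|
          ≤ B * Real.sqrt (2 * n * Real.log (4 * ((l + n - 1) : ℕ) ^ 3 / δ))}
  have hGc : Gᶜ ⊆ ⋃ p : ℕ × ℕ, {ω | B * √(2 * ((p.2 + 1 : ℕ) : ℝ) *
      log (4 * ((p.1 + p.2 + 1 : ℕ) : ℝ) ^ 3 / δ)) <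
        |∑ i ∈ Ico (p.1 + 1) (p.1 + 1 + (p.2 + 1)), X i ω|} := by
    intro ω hω
    simp only [G, Set.mem_compl_iff, Set.mem_ofPred_eq, not_forall, not_le] at hω
    obtain ⟨l, hl, n, hn, hω⟩ := hω
    refine Set.mem_iUnion.2 ⟨(l - 1, n - 1), ?_⟩
    rwa [Nat.sub_add_cancel hl, Nat.sub_add_cancel hn,
      show l - 1 + (n - 1) + 1 = l + n - 1 by omega,
      ← Icc_sub_one_right_eq_Ico_of_not_isMin (by simp; omega)]
  have hμGc : μ Gᶜ ≤ ENNReal.ofReal δ := calc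
    μ Gᶜ ≤ ∑' p : ℕ × ℕ,
        ENNReal.ofReal (2 * exp (-log (4 * ((p.1 + p.2 + 1 : ℕ) : ℝ) ^ 3 / δ))) :=
      (measure_mono hGc).trans <| (measure_iUnion_le _).trans <| ENNReal.tsum_le_tsum fun p =>
        measure_lt_abs_sum_Ico_le hadapted hint hmds hB hbdd le_add_self _ _
    _ = ∑' p : ℕ × ℕ, ENNReal.ofReal (δ / (2 * ((p.1 + p.2 + 1 : ℕ) : ℝ) ^ 3)) := by
      refine tsum_congr fun p => ?_
      rw [exp_neg, exp_log (by positivity), inv_div]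
      congr 1
      ring
    _ ≤ ENNReal.ofReal δ := tsum_ofReal_div_two_mul_cube_le hδ0.le
  calc 1 - ENNReal.ofReal δ ≤ 1 - μ Gᶜ := tsub_le_tsub_left hμGc 1
    _ ≤ μ G := tsub_le_iff_right.2 (by simpa using measure_univ_le_add_compl (μ := μ) G)

/-- Any-interval Azuma inequality: with probability at least `1 - δ`, the partial
sums of a bounded martingale difference sequence over every interval `[l, l+n-1]`
are simultaneously bounded. -/
theorem stmt_12 {Ω : Type*} {m : MeasurableSpace Ω} (μ : Measure Ω)
    [IsProbabilityMeasure μ] (ℱ : Filtration ℕ m)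
    (X : ℕ → Ω → ℝ) (B : ℝ) (hB : 0 ≤ B)
    (hadapted : ∀ i, StronglyMeasurable[ℱ i] (X i))
    (hint : ∀ i, Integrable (X i) μ)
    (hmds : ∀ i, 1 ≤ i → μ[X i | ℱ (i - 1)] =ᵐ[μ] 0)
    (hbdd : ∀ i, ∀ᵐ ω ∂μ, |X i ω| ≤ B)
    (δ : ℝ) (hδ0 : 0 < δ) (hδ1 : δ < 1) :
    1 - ENNReal.ofReal δ ≤
      μ {ω | ∀ l, 1 ≤ l → ∀ n, 1 ≤ n →
        |∑ i ∈ Finset.Icc l (l + n - 1), X i ω|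
          ≤ B * Real.sqrt (2 * n * Real.log (4 * ((l + n - 1) : ℕ) ^ 3 / δ))} :=
  stmt_12_general μ ℱ X B hB hadapted hint hmds hbdd δ hδ0
end

section
/- Let S and A be finite sets, P : S × A → Δ(S) a transition function, d : S × A → ℝ a utility function, and π, π' : S → Δ(A) two policies. Suppose μ_π is a stationary distribution of the transition matrix P^π induced by π (i.e., Σ_s μ_π(s)·Σ_a π(a|s)·P(s,a)(s') = μ_π(s') for all s'), and set J^{π} = Σ_{s,a} μ_π(s)·π(a|s)·d(s,a). Suppose further that q : S × A → ℝ, v : S → ℝ, and J' ∈ ℝ satisfy the average-reward Bellman equations for π': q(s,a) = d(s,a) − J' + Σ_{s'} P(s,a)(s')·v(s') for all (s,a), and v(s) = Σ_a π'(a|s)·q(s,a) for all s. Then J^{π} − J' = Σ_{s∈S} μ_π(s)·Σ_{a∈A} ( π(a|s) − π'(a|s) )·q(s,a). -/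
/-- Average-reward performance difference lemma: the gap between the long-run
average utilities of two policies equals the stationary-weighted advantage of one
policy over the other, measured via the second policy's action-value function. -/
theorem stmt_16 {S A : Type*} [Fintype S] [Fintype A]
    (P : S → A → S → ℝ)
    (hP : ∀ s a, (∀ s', 0 ≤ P s a s') ∧ ∑ s', P s a s' = 1)
    (d : S → A → ℝ)
    (π π' : S → A → ℝ)
    (hπ : ∀ s, (∀ a, 0 ≤ π s a) ∧ ∑ a, π s a = 1)
    (hπ' : ∀ s, (∀ a, 0 ≤ π' s a) ∧ ∑ a, π' s a = 1)
    (μ : S → ℝ) (hμ0 : ∀ s, 0 ≤ μ s) (hμ1 : ∑ s, μ s = 1)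
    (hstat : ∀ s', ∑ s, μ s * ∑ a, π s a * P s a s' = μ s')
    (J J' : ℝ) (hJ : J = ∑ s, ∑ a, μ s * π s a * d s a)
    (q : S → A → ℝ) (v : S → ℝ)
    (hq : ∀ s a, q s a = d s a - J' + ∑ s', P s a s' * v s')
    (hv : ∀ s, v s = ∑ a, π' s a * q s a) :
    J - J' = ∑ s, μ s * ∑ a, (π s a - π' s a) * q s a := by
  have key : ∀ s, ∑ a, π s a * q s a
      = (∑ a, π s a * d s a) - J' + ∑ a, π s a * ∑ s', P s a s' * v s' := by
    intro s
    have h1 : ∑ a, π s a * q s a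
        = ∑ a, (π s a * d s a - π s a * J' + π s a * ∑ s', P s a s' * v s') := by
      apply Finset.sum_congr rfl; intro a _; rw [hq s a]; ring
    rw [h1, Finset.sum_add_distrib, Finset.sum_sub_distrib, ← Finset.sum_mul, (hπ s).2,
      one_mul]
  have hPv : ∑ s, μ s * ∑ a, π s a * ∑ s', P s a s' * v s' = ∑ s, μ s * v s := by
    have : ∀ s, μ s * ∑ a, π s a * ∑ s', P s a s' * v s'
        = ∑ s', (μ s * ∑ a, π s a * P s a s') * v s' := by
      intro s
      simp_rw [Finset.mul_sum, Finset.sum_mul]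
      rw [Finset.sum_comm]
      apply Finset.sum_congr rfl; intro s' _
      apply Finset.sum_congr rfl; intro a _; ring
    simp_rw [this]
    rw [Finset.sum_comm]
    apply Finset.sum_congr rfl; intro s' _
    rw [← Finset.sum_mul]
    simp_rw [hstat s']
  have hsplit : ∑ s, μ s * ∑ a, (π s a - π' s a) * q s a
      = (∑ s, μ s * ∑ a, π s a * q s a) - ∑ s, μ s * v s := by
    rw [← Finset.sum_sub_distrib]
    apply Finset.sum_congr rfl; intro s _
    rw [hv s, ← mul_sub, ← Finset.sum_sub_distrib]
    congr 1; apply Finset.sum_congr rfl; intro a _; ring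
  rw [hsplit]
  simp_rw [key]
  have : ∑ s, μ s * ((∑ a, π s a * d s a) - J' + ∑ a, π s a * ∑ s', P s a s' * v s')
      = (∑ s, μ s * ∑ a, π s a * d s a) - (∑ s, μ s) * J'
        + ∑ s, μ s * ∑ a, π s a * ∑ s', P s a s' * v s' := by
    rw [Finset.sum_mul, ← Finset.sum_sub_distrib, ← Finset.sum_add_distrib]
    apply Finset.sum_congr rfl; intro s _; ring
  rw [this, hμ1, hPv, hJ]
  have : ∑ s, ∑ a, μ s * π s a * d s a = ∑ s, μ s * ∑ a, π s a * d s a := by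
    apply Finset.sum_congr rfl; intro s _
    rw [Finset.mul_sum]; apply Finset.sum_congr rfl; intro a _; ring
  rw [this]; ring
end
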